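/- arXiv:2508.18863 — 4 statements merged into one kernel-verified Lean document; each statement's English description precedes it below -/
import Mathlib

section
/- Let μ₁, μ₂ ∈ ℝ, σ₁, σ₂ > 0, and let X and Y be independent real random variables with Gaussian distributions of means μ₁, μ₂ and variances σ₁², σ₂² respectively. Let ϱ ∈ [1/2, 1) and let q_X, q_Y ∈ ℝ satisfy P(X ≤ q_X) ≥ ϱ and P(Y ≤ q_Y) ≥ ϱ. Then P(X + Y ≤ q_X + q_Y) ≥ ϱ. -/
open MeasureTheory ProbabilityTheory Set
open scoped ENNReal NNReal

/-!
Standardize: with `Φ` the standard normal CDF, `P(X ≤ qX) = Φ(z₁)` for `z₁ = (qX - μ₁)/σ₁`,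
similarly `z₂`, and `X + Y ~ N(μ₁ + μ₂, σ₁² + σ₂²)` gives
`P(X + Y ≤ qX + qY) = Φ((σ₁z₁ + σ₂z₂)/√(σ₁² + σ₂²))`. Since `Φ(0) = 1/2 ≤ ϱ ≤ Φ(zᵢ)` and `Φ` is
strictly increasing, `zᵢ ≥ 0`; then `√(σ₁² + σ₂²) ≤ σ₁ + σ₂` makes that argument at least
`min z₁ z₂`, and `Φ(min z₁ z₂) = min (Φ z₁) (Φ z₂) ≥ ϱ`.
-/

lemma min_div_le_add_div {a b s₁ s₂ s : ℝ} (ha : 0 ≤ a) (hb : 0 ≤ b) (hs₁ : 0 < s₁)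
    (hs₂ : 0 < s₂) (hs : 0 < s) (hs_le : s ≤ s₁ + s₂) :
    min (a / s₁) (b / s₂) ≤ (a + b) / s := by
  have hm : 0 ≤ min (a / s₁) (b / s₂) := by positivity
  have hm₁ : s₁ * min (a / s₁) (b / s₂) ≤ a := (le_div_iff₀' hs₁).1 (min_le_left _ _)
  have hm₂ : s₂ * min (a / s₁) (b / s₂) ≤ b := (le_div_iff₀' hs₂).1 (min_le_right _ _)
  rw [le_div_iff₀' hs]
  nlinarith

lemma Real.sqrt_add_le_add_sqrt {x y : ℝ} (hx : 0 ≤ x) (hy : 0 ≤ y) : √(x + y) ≤ √x + √y := by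
  rw [Real.sqrt_le_left (by positivity), add_sq, Real.sq_sqrt hx, Real.sq_sqrt hy]
  nlinarith [Real.sqrt_nonneg x, Real.sqrt_nonneg y]

lemma MeasureTheory.measure_setOf_le_eq_of_map_eq {Ω : Type*} [MeasurableSpace Ω]
    {P : Measure Ω} {Z : Ω → ℝ} {ν : Measure ℝ} [IsProbabilityMeasure ν] (hZ : P.map Z = ν)
    (q : ℝ) : P {ω | Z ω ≤ q} = ν (Iic q) := by
  have hZm : AEMeasurable Z P := .of_map_ne_zero (hZ ▸ IsProbabilityMeasure.ne_zero ν)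
  rw [← hZ, Measure.map_apply_of_aemeasurable hZm measurableSet_Iic]
  rfl

namespace ProbabilityTheory

variable {μ : ℝ} {v : ℝ≥0}

lemma gaussianReal_Iic_eq_stdGaussian (hv : v ≠ 0) (q : ℝ) :
    gaussianReal μ v (Iic q) = gaussianReal 0 1 (Iic ((q - μ) / √v)) := by
  have hsqrt : 0 < √(v : ℝ) := Real.sqrt_pos.2 (by positivity)
  have hstd : (gaussianReal μ v).map ((· / √v) ∘ (· - μ)) = gaussianReal 0 1 := by
    rw [← Measure.map_map (by fun_prop) (by fun_prop), gaussianReal_map_sub_const,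
      gaussianReal_map_div_const, sub_self, zero_div]
    congr
    ext
    simp [Real.sq_sqrt, hv]
  rw [← hstd, Measure.map_apply (by fun_prop) measurableSet_Iic]
  congr
  ext x
  simp [div_le_div_iff_of_pos_right hsqrt]

lemma strictMono_gaussianReal_Iic (μ : ℝ) (hv : v ≠ 0) :
    StrictMono fun q ↦ gaussianReal μ v (Iic q) := by
  intro a b hab
  have hIoc : gaussianReal μ v (Ioc a b) ≠ 0 := fun h ↦ by
    simpa [hab.not_ge] using gaussianReal_absolutelyContinuous' μ hv h
  dsimp only
  rw [← Iic_union_Ioc_eq_Iic hab.le, measure_union (Iic_disjoint_Ioc le_rfl) measurableSet_Ioc]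
  exact ENNReal.lt_add_right (measure_ne_top _ _) hIoc

lemma gaussianReal_Iic_self (hv : v ≠ 0) : gaussianReal μ v (Iic μ) = 2⁻¹ := by
  have := nullSingletonClass_gaussianReal (μ := μ) hv
  have hreflect : (gaussianReal μ v).map (2 * μ - ·) = gaussianReal μ v := by
    rw [gaussianReal_map_const_sub]; ring_nf
  have hsymm : gaussianReal μ v (Iic μ) = gaussianReal μ v (Ioi μ) := by
    conv_lhs => rw [← hreflect]
    rw [Measure.map_apply (by fun_prop) measurableSet_Iic, measure_congr Ioi_ae_eq_Ici]
    congr 1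
    ext x
    simp only [mem_preimage, mem_Iic, mem_Ici]
    constructor <;> intro h <;> linarith
  have htotal := prob_add_prob_compl (μ := gaussianReal μ v) (measurableSet_Iic (a := μ))
  rw [compl_Iic, ← hsymm, ← two_mul] at htotal
  rw [← one_div]
  exact (ENNReal.eq_div_iff two_ne_zero ENNReal.ofNat_ne_top).2 htotal

lemma le_of_inv_two_le_gaussianReal_Iic (hv : v ≠ 0) {q : ℝ}
    (hq : 2⁻¹ ≤ gaussianReal μ v (Iic q)) : μ ≤ q := by
  by_contra! hlt
  have hlt' : gaussianReal μ v (Iic q) < 2⁻¹ :=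
    gaussianReal_Iic_self (μ := μ) hv ▸ strictMono_gaussianReal_Iic μ hv hlt
  exact hlt'.not_ge hq

lemma min_gaussianReal_Iic_le_gaussianReal_add_Iic {μ₁ μ₂ q₁ q₂ : ℝ} {v₁ v₂ : ℝ≥0}
    (hv₁ : v₁ ≠ 0) (hv₂ : v₂ ≠ 0) (hq₁ : μ₁ ≤ q₁) (hq₂ : μ₂ ≤ q₂) :
    min (gaussianReal μ₁ v₁ (Iic q₁)) (gaussianReal μ₂ v₂ (Iic q₂))
      ≤ gaussianReal (μ₁ + μ₂) (v₁ + v₂) (Iic (q₁ + q₂)) := by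
  have hv : v₁ + v₂ ≠ 0 := by positivity
  rw [gaussianReal_Iic_eq_stdGaussian hv₁, gaussianReal_Iic_eq_stdGaussian hv₂,
    gaussianReal_Iic_eq_stdGaussian hv,
    ← (strictMono_gaussianReal_Iic 0 one_ne_zero).monotone.map_min]
  refine measure_mono (Iic_subset_Iic.2 ?_)
  rw [NNReal.coe_add, show q₁ + q₂ - (μ₁ + μ₂) = (q₁ - μ₁) + (q₂ - μ₂) by ring]
  exact min_div_le_add_div (sub_nonneg.2 hq₁) (sub_nonneg.2 hq₂) (by positivity) (by positivity)
    (by positivity) (Real.sqrt_add_le_add_sqrt v₁.2 v₂.2)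

end ProbabilityTheory

theorem gaussian_gaussian_quantile_subadditive_general
    {Ω : Type*} [MeasurableSpace Ω] (P : Measure Ω)
    (μ₁ μ₂ σ₁ σ₂ : ℝ) (hσ₁ : 0 < σ₁) (hσ₂ : 0 < σ₂)
    (X Y : Ω → ℝ)
    (hXY : IndepFun X Y P)
    (hX : Measure.map X P = gaussianReal μ₁ ⟨σ₁ ^ 2, sq_nonneg σ₁⟩)
    (hY : Measure.map Y P = gaussianReal μ₂ ⟨σ₂ ^ 2, sq_nonneg σ₂⟩)
    (ϱ : ℝ) (hϱ : ϱ ∈ Set.Ico (1 / 2 : ℝ) 1)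
    (qX qY : ℝ)
    (hqX : ENNReal.ofReal ϱ ≤ P {ω | X ω ≤ qX})
    (hqY : ENNReal.ofReal ϱ ≤ P {ω | Y ω ≤ qY}) :
    ENNReal.ofReal ϱ ≤ P {ω | X ω + Y ω ≤ qX + qY} := by
  -- with the variances named, instance search sees `gaussianReal μ v` for an atomic `v`
  set v₁ : ℝ≥0 := ⟨σ₁ ^ 2, sq_nonneg σ₁⟩
  set v₂ : ℝ≥0 := ⟨σ₂ ^ 2, sq_nonneg σ₂⟩
  have hv₁ : v₁ ≠ 0 := ne_of_gt (pow_pos hσ₁ 2)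
  have hv₂ : v₂ ≠ 0 := ne_of_gt (pow_pos hσ₂ 2)
  have hϱ_half : (2⁻¹ : ℝ≥0∞) ≤ ENNReal.ofReal ϱ := by
    simpa using ENNReal.ofReal_le_ofReal hϱ.1
  rw [measure_setOf_le_eq_of_map_eq hX] at hqX
  rw [measure_setOf_le_eq_of_map_eq hY] at hqY
  change _ ≤ P {ω | (X + Y) ω ≤ qX + qY}
  rw [measure_setOf_le_eq_of_map_eq (gaussianReal_add_gaussianReal_of_indepFun hXY hX hY)]
  exact (le_min hqX hqY).trans <| min_gaussianReal_Iic_le_gaussianReal_add_Iic hv₁ hv₂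
    (le_of_inv_two_le_gaussianReal_Iic hv₁ (hϱ_half.trans hqX))
    (le_of_inv_two_le_gaussianReal_Iic hv₂ (hϱ_half.trans hqY))

/-- Gaussian special case of quantile sub-additivity (Lemma 2 of the paper):
for independent Gaussians `X ~ N(μ₁, σ₁²)`, `Y ~ N(μ₂, σ₂²)` and `ϱ ∈ [1/2, 1)`,
if `P(X ≤ qX) ≥ ϱ` and `P(Y ≤ qY) ≥ ϱ` then `P(X + Y ≤ qX + qY) ≥ ϱ`. -/
theorem gaussian_gaussian_quantile_subadditive
    {Ω : Type*} [MeasurableSpace Ω] (P : Measure Ω) [IsProbabilityMeasure P]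
    (μ₁ μ₂ σ₁ σ₂ : ℝ) (hσ₁ : 0 < σ₁) (hσ₂ : 0 < σ₂)
    (X Y : Ω → ℝ)
    (hXY : IndepFun X Y P)
    (hX : Measure.map X P = gaussianReal μ₁ ⟨σ₁ ^ 2, sq_nonneg σ₁⟩)
    (hY : Measure.map Y P = gaussianReal μ₂ ⟨σ₂ ^ 2, sq_nonneg σ₂⟩)
    (ϱ : ℝ) (hϱ : ϱ ∈ Set.Ico (1 / 2 : ℝ) 1)
    (qX qY : ℝ)
    (hqX : ENNReal.ofReal ϱ ≤ P {ω | X ω ≤ qX})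
    (hqY : ENNReal.ofReal ϱ ≤ P {ω | Y ω ≤ qY}) :
    ENNReal.ofReal ϱ ≤ P {ω | X ω + Y ω ≤ qX + qY} :=
  gaussian_gaussian_quantile_subadditive_general P μ₁ μ₂ σ₁ σ₂ hσ₁ hσ₂ X Y hXY hX hY ϱ hϱ qX qY hqX
    hqY
end

section
/- Fix constants ψ > 0, D > 0, P_max > 0, f_max > 0, κ > 0, ζ > 0, f_b > 0, t_p > 0, n_p > 0, η > 0, ε ∈ (0,1), ϱ ∈ (0,1), Q_max > 1, and E_max > 0. For f > 0 and Q ∈ [1, Q_max], define the energy E(f, Q) = P_max·(e^{ψQ} − e^{ψ})·D·f²/f_max³ + D/((1−ε)·Q·η), and define the latency quantile L(f, Q) = inf{ t ∈ ℝ : P(T(f,Q) ≤ t) ≥ ϱ }, where T(f,Q) = (1 + ζ f/f_b)·X + G, with X and G independent, X Gamma-distributed with shape κ and rate κ f/((e^{ψQ} − e^{ψ})·D), and G Gaussian-distributed with mean N(Q)·t_p/(1−ε) and variance N(Q)·t_p²·ε/(1−ε)², where N(Q) = D/(Q·n_p). Suppose (f*, Q*) minimizes L over the feasible set {(f,Q)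 : 0 < f ≤ f_max, 1 ≤ Q ≤ Q_max, E(f,Q) ≤ E_max}, and suppose Q* > 1. Then either f* = f_max or E(f*, Q*) = E_max; in the latter case f* = √( (E_max − D/((1−ε)·Q*·η)) · f_max³ / ((e^{ψQ*} − e^{ψ})·D·P_max) ). -/
open MeasureTheory ProbabilityTheory Set

/-- Total (compression + communication) energy in the power-constrained scenario:
`E(f, Q) = P_max (e^{ψQ} − e^{ψ}) D f² / f_max³ + D / ((1−ε) Q η)`. -/
noncomputable def energyPC (ψ D Pmax fmax η ε f Q : ℝ) : ℝ :=
  Pmax * (Real.exp (ψ * Q) - Real.exp ψ) * D * f ^ 2 / fmax ^ 3 +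
    D / ((1 - ε) * Q * η)

/-- The distribution of the end-to-end latency
`T(f,Q) = (1 + ζ f / f_b) X + G`, where `X` and `G` are independent,
`X ~ Gamma(κ, κ f / ((e^{ψQ} − e^{ψ}) D))` and
`G ~ N(N(Q) t_p / (1−ε), N(Q) t_p² ε / (1−ε)²)` with `N(Q) = D / (Q n_p)`. -/
noncomputable def latencyDistPC (ψ D κ ζ fb tp np ε f Q : ℝ) : Measure ℝ :=
  Measure.map (fun p : ℝ × ℝ => (1 + ζ * f / fb) * p.1 + p.2)
    ((gammaMeasure κ (κ * f / ((Real.exp (ψ * Q) - Real.exp ψ) * D))).prod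
      (gaussianReal ((D / (Q * np)) * tp / (1 - ε))
        (Real.toNNReal ((D / (Q * np)) * tp ^ 2 * ε / (1 - ε) ^ 2))))

/-- The `ϱ`-quantile of the end-to-end latency:
`L(f,Q) = inf { t : ℝ | P(T(f,Q) ≤ t) ≥ ϱ }`. -/
noncomputable def latencyQuantilePC (ψ D κ ζ fb tp np ε ϱ f Q : ℝ) : ℝ :=
  sInf {t : ℝ | ENNReal.ofReal ϱ ≤ latencyDistPC ψ D κ ζ fb tp np ε f Q (Iic t)}

/-!
Raising the CPU frequency `f` rescales the Gamma-distributed compression time: writing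
`X = Y / f` with `Y ~ Gamma(κ, κ / ((e^{ψQ} − e^{ψ}) D))`, the latency is `(f⁻¹ + ζ / f_b) Y + G`.
Since `Y > 0` almost surely and the Gaussian `G` has a strictly increasing, continuous cdf, the
latency cdf strictly increases pointwise with `f`, so its `ϱ`-quantile strictly decreases. Hence at
an optimum with `f* < f_max` every larger frequency must break the energy budget; by continuity of
the energy in `f` the budget is then tight at `f*`, and solving the quadratic energy equation for
`f*` gives the closed form.
-/

open Filter Topology
open scoped ENNReal NNReal

namespace ProbabilityTheory

noncomputable def quantile (μ : Measure ℝ) (ϱ : ℝ) : ℝ :=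
  sInf {t : ℝ | ENNReal.ofReal ϱ ≤ μ (Iic t)}

section Cdf

variable (μ : Measure ℝ) {ϱ : ℝ}

lemma bddBelow_setOf_le_cdf (hϱ : 0 < ϱ) : BddBelow {t | ϱ ≤ cdf μ t} := by
  obtain ⟨t₀, ht₀⟩ := eventually_atBot.mp ((tendsto_cdf_atBot μ).eventually (gt_mem_nhds hϱ))
  exact ⟨t₀, fun t ht => le_of_not_gt fun h => (ht₀ t h.le).not_ge ht⟩

lemma nonempty_setOf_le_cdf (hϱ : ϱ < 1) : {t | ϱ ≤ cdf μ t}.Nonempty :=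
  ((tendsto_cdf_atTop μ).eventually (lt_mem_nhds hϱ)).exists.imp fun _ => le_of_lt

lemma le_cdf_sInf_setOf_le_cdf (hϱ₀ : 0 < ϱ) (hϱ₁ : ϱ < 1) :
    ϱ ≤ cdf μ (sInf {t | ϱ ≤ cdf μ t}) := by
  set q := sInf {t | ϱ ≤ cdf μ t}
  refine ge_of_tendsto ((cdf μ).right_continuous q |>.mono Ioi_subset_Ici_self) ?_
  filter_upwards [self_mem_nhdsWithin] with t (ht : q < t)
  obtain ⟨s, hs, hst⟩ :=
    (csInf_lt_iff (bddBelow_setOf_le_cdf μ hϱ₀) (nonempty_setOf_le_cdf μ hϱ₁)).mp ht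
  exact hs.trans (monotone_cdf μ hst.le)

lemma quantile_eq_sInf_setOf_le_cdf [IsProbabilityMeasure μ] (ϱ : ℝ) :
    quantile μ ϱ = sInf {t | ϱ ≤ cdf μ t} := by
  simp only [quantile, ← ofReal_cdf, ENNReal.ofReal_le_ofReal_iff (cdf_nonneg μ _)]

lemma tendsto_cdf_nhdsLT [IsProbabilityMeasure μ] [NullSingletonClass μ] (x : ℝ) :
    Tendsto (cdf μ) (𝓝[<] x) (𝓝 (cdf μ x)) := by
  have h := (cdf μ).measure_singleton x
  rw [measure_cdf, measure_singleton, eq_comm, ENNReal.ofReal_eq_zero, sub_nonpos] at h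
  convert (monotone_cdf μ).tendsto_leftLim x using 2
  exact le_antisymm h ((monotone_cdf μ).leftLim_le le_rfl)

end Cdf

theorem quantile_lt_of_measure_Iic_lt {μ ν : Measure ℝ} [IsProbabilityMeasure μ]
    [IsProbabilityMeasure ν] [NullSingletonClass ν] {ϱ : ℝ} (hϱ₀ : 0 < ϱ) (hϱ₁ : ϱ < 1)
    (h : ∀ t, μ (Iic t) < ν (Iic t)) : quantile ν ϱ < quantile μ ϱ := by
  rw [quantile_eq_sInf_setOf_le_cdf, quantile_eq_sInf_setOf_le_cdf]
  set q := sInf {t | ϱ ≤ cdf μ t}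
  have hq : ϱ < cdf ν q := by
    refine (le_cdf_sInf_setOf_le_cdf μ hϱ₀ hϱ₁).trans_lt ?_
    simpa only [← ofReal_cdf, ENNReal.ofReal_lt_ofReal_iff_of_nonneg (cdf_nonneg μ q)] using h q
  obtain ⟨t, ht, htq⟩ :=
    (((tendsto_cdf_nhdsLT ν q).eventually (lt_mem_nhds hq)).and self_mem_nhdsWithin).exists
  exact (csInf_le (bddBelow_setOf_le_cdf ν hϱ₀) ht.le).trans_lt htq

end ProbabilityTheory

lemma lintegral_comp_mul_left_real (f : ℝ → ℝ≥0∞) {s : ℝ} (hs : s ≠ 0) :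
    ∫⁻ x, f (s * x) = ENNReal.ofReal |s⁻¹| * ∫⁻ x, f x := by
  rw [← (measurableEmbedding_mulLeft₀ hs).lintegral_map, Real.map_volume_mul_left hs,
    lintegral_smul_measure, smul_eq_mul]

lemma strictMono_measure_Iic_of_absolutelyContinuous {ν : Measure ℝ} [IsFiniteMeasure ν]
    (h : volume ≪ ν) : StrictMono fun t => ν (Iic t) := by
  intro t₁ t₂ ht
  have hpos : ν (Ioc t₁ t₂) ≠ 0 := fun h0 =>
    (ht.trans_le (by simpa [Real.volume_Ioc] using h h0)).false
  show ν (Iic t₁) < ν (Iic t₂)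
  rw [← Iic_union_Ioc_eq_Iic ht.le, measure_union (Iic_disjoint_Ioc le_rfl) measurableSet_Ioc]
  exact ENNReal.lt_add_right (measure_ne_top _ _) hpos

lemma lintegral_measure_Iic_sub_mul_lt {γ N : Measure ℝ} [IsFiniteMeasure γ] [IsFiniteMeasure N]
    (hγ₀ : γ ≠ 0) (hγ : γ (Iic 0) = 0) (hN : StrictMono fun t => N (Iic t)) {b b' : ℝ}
    (hb : b' < b) (t : ℝ) :
    ∫⁻ u, N (Iic (t - b * u)) ∂γ < ∫⁻ u, N (Iic (t - b' * u)) ∂γ := by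
  refine lintegral_strict_mono hγ₀ ?_ ?_ ?_
  · exact (hN.monotone.measurable.comp (by fun_prop)).aemeasurable
  · refine ((lintegral_mono fun u => measure_mono (subset_univ _)).trans_lt ?_).ne
    simp [lintegral_const, ENNReal.mul_lt_top]
  · have hpos : ∀ᵐ u ∂γ, 0 < u := by
      simpa using measure_eq_zero_iff_ae_notMem.mp hγ
    filter_upwards [hpos] with u hu
    exact hN (by nlinarith)

section MapMulAddProd

variable (γ N : Measure ℝ) [SFinite N] (c : ℝ)

lemma map_mul_add_prod_apply {S : Set ℝ} (hS : MeasurableSet S) :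
    (γ.prod N).map (fun p => c * p.1 + p.2) S = ∫⁻ u, N ((c * u + ·) ⁻¹' S) ∂γ := by
  have hφ : Measurable fun p : ℝ × ℝ => c * p.1 + p.2 := by fun_prop
  rw [Measure.map_apply hφ hS, Measure.prod_apply (hφ hS)]
  rfl

lemma map_mul_add_prod_apply_Iic (t : ℝ) :
    (γ.prod N).map (fun p => c * p.1 + p.2) (Iic t) = ∫⁻ u, N (Iic (t - c * u)) ∂γ := by
  simp only [map_mul_add_prod_apply γ N c measurableSet_Iic, preimage_const_add_Iic]

instance [NullSingletonClass N] :
    NullSingletonClass ((γ.prod N).map fun p => c * p.1 + p.2) where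
  measure_singleton x := by
    simp [map_mul_add_prod_apply γ N c (measurableSet_singleton x)]

end MapMulAddProd

section Gamma

variable (a : ℝ) {r s : ℝ}

instance : SFinite (gammaMeasure a r) := by
  unfold gammaMeasure
  infer_instance

lemma gammaMeasure_Iic_of_nonpos {x : ℝ} (hx : x ≤ 0) : gammaMeasure a r (Iic x) = 0 := by
  rw [gammaMeasure, ← measure_congr ((withDensity_absolutelyContinuous _ _).ae_eq Iio_ae_eq_Iic),
    withDensity_apply _ measurableSet_Iio, lintegral_gammaPDF_of_nonpos hx]

lemma gammaPDF_mul_rate (hr : 0 ≤ r) (hs : 0 < s) (x : ℝ) :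
    gammaPDF a (r * s) x = ENNReal.ofReal s * gammaPDF a r (s * x) := by
  rw [gammaPDF, gammaPDF, ← ENNReal.ofReal_mul hs.le]
  congr 1
  unfold gammaPDFReal
  by_cases hx : 0 ≤ x
  · rw [if_pos hx, if_pos (by positivity), Real.mul_rpow hr hs.le, Real.mul_rpow hs.le hx,
      Real.rpow_sub_one hs.ne']
    field_simp
  · rw [if_neg hx, if_neg (by nlinarith), mul_zero]

lemma gammaMeasure_mul_rate (hr : 0 ≤ r) (hs : 0 < s) :
    gammaMeasure a (r * s) = (gammaMeasure a r).map (· / s) := by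
  refine Measure.ext_of_lintegral _ fun g hg => ?_
  have hpdf (r : ℝ) : Measurable (gammaPDF a r) := (measurable_gammaPDFReal a r).ennreal_ofReal
  rw [lintegral_map hg (measurable_div_const s), gammaMeasure, gammaMeasure,
    lintegral_withDensity_eq_lintegral_mul _ (hpdf _) hg,
    lintegral_withDensity_eq_lintegral_mul _ (hpdf _) (g := fun x => g (x / s))
      (hg.comp (measurable_div_const s))]
  set H : ℝ → ℝ≥0∞ := fun y => gammaPDF a r y * g (y / s)
  have key (x : ℝ) : (gammaPDF a (r * s) * g) x = ENNReal.ofReal s * H (s * x) := by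
    simp only [H, Pi.mul_apply, gammaPDF_mul_rate a hr hs, mul_div_cancel_left₀ x hs.ne', mul_assoc]
  rw [lintegral_congr key, lintegral_const_mul' _ _ ENNReal.ofReal_ne_top,
    lintegral_comp_mul_left_real H hs.ne', ← mul_assoc, ← ENNReal.ofReal_mul hs.le, abs_inv,
    abs_of_pos hs, mul_inv_cancel₀ hs.ne', ENNReal.ofReal_one, one_mul]
  rfl

end Gamma

lemma map_mul_add_prod_gammaMeasure_mul_rate (a : ℝ) {r s : ℝ} (hr : 0 ≤ r) (hs : 0 < s)
    (N : Measure ℝ) [SFinite N] (c : ℝ) :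
    ((gammaMeasure a (r * s)).prod N).map (fun p => c * p.1 + p.2)
      = ((gammaMeasure a r).prod N).map (fun p => c / s * p.1 + p.2) := by
  rw [gammaMeasure_mul_rate a hr hs, ← Measure.map_id (μ := N),
    Measure.map_prod_map _ _ (measurable_div_const s) measurable_id, Measure.map_id,
    Measure.map_map (by fun_prop) (by fun_prop)]
  congr 1
  ext p
  simp only [Function.comp_apply, Prod.map_fst, Prod.map_snd, id_eq]
  ring

theorem strictMono_quantile_map_mul_add_gammaMeasure_prod_gaussianReal {a r : ℝ} (ha : 0 < a)
    (hr : 0 < r) (m : ℝ) {v : ℝ≥0} (hv : v ≠ 0) {ϱ : ℝ} (hϱ₀ : 0 < ϱ) (hϱ₁ : ϱ < 1) :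
    StrictMono fun c =>
      quantile (((gammaMeasure a r).prod (gaussianReal m v)).map fun p => c * p.1 + p.2) ϱ := by
  have := isProbabilityMeasure_gammaMeasure ha hr
  have := nullSingletonClass_gaussianReal (μ := m) hv
  have (c : ℝ) : IsProbabilityMeasure
      (((gammaMeasure a r).prod (gaussianReal m v)).map fun p => c * p.1 + p.2) :=
    Measure.isProbabilityMeasure_map (by fun_prop)
  intro c' c hc
  refine quantile_lt_of_measure_Iic_lt hϱ₀ hϱ₁ fun t => ?_
  simp only [map_mul_add_prod_apply_Iic]
  exact lintegral_measure_Iic_sub_mul_lt (IsProbabilityMeasure.ne_zero _)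
    (gammaMeasure_Iic_of_nonpos a le_rfl)
    (strictMono_measure_Iic_of_absolutelyContinuous (gaussianReal_absolutelyContinuous' m hv)) hc t

section PowerConstrained

variable {ψ D Pmax fmax κ ζ fb tp np η ε ϱ Q : ℝ}

lemma latencyDistPC_eq_map {f : ℝ} (hrate : 0 ≤ κ / ((Real.exp (ψ * Q) - Real.exp ψ) * D))
    (hf : 0 < f) :
    latencyDistPC ψ D κ ζ fb tp np ε f Q
      = ((gammaMeasure κ (κ / ((Real.exp (ψ * Q) - Real.exp ψ) * D))).prod
          (gaussianReal ((D / (Q * np)) * tp / (1 - ε))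
            (Real.toNNReal ((D / (Q * np)) * tp ^ 2 * ε / (1 - ε) ^ 2)))).map
          fun p => (f⁻¹ + ζ / fb) * p.1 + p.2 := by
  rw [latencyDistPC, mul_div_right_comm κ f, map_mul_add_prod_gammaMeasure_mul_rate κ hrate hf]
  congr 3
  field_simp

theorem latencyQuantilePC_strictAntiOn (hψ : 0 < ψ) (hD : 0 < D) (hκ : 0 < κ) (htp : 0 < tp)
    (hnp : 0 < np) (hε : ε ∈ Ioo (0 : ℝ) 1) (hϱ : ϱ ∈ Ioo (0 : ℝ) 1) (hQ : 1 < Q) :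
    StrictAntiOn (fun f => latencyQuantilePC ψ D κ ζ fb tp np ε ϱ f Q) (Ioi 0) := by
  obtain ⟨hε₀, hε₁⟩ := hε
  have hk : 0 < Real.exp (ψ * Q) - Real.exp ψ :=
    sub_pos.mpr (Real.exp_lt_exp.mpr (lt_mul_of_one_lt_right hψ hQ))
  have hrate : 0 < κ / ((Real.exp (ψ * Q) - Real.exp ψ) * D) := by positivity
  have hv : Real.toNNReal ((D / (Q * np)) * tp ^ 2 * ε / (1 - ε) ^ 2) ≠ 0 := by
    have : 0 < 1 - ε := sub_pos.mpr hε₁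
    have : 0 < Q := zero_lt_one.trans hQ
    positivity
  intro f (hf : 0 < f) f' (hf' : 0 < f') hff'
  change quantile _ ϱ < quantile _ ϱ
  rw [latencyDistPC_eq_map hrate.le hf, latencyDistPC_eq_map hrate.le hf']
  refine strictMono_quantile_map_mul_add_gammaMeasure_prod_gaussianReal hκ hrate _ hv hϱ.1 hϱ.2 ?_
  gcongr

lemma energyPC_eq (ψ D Pmax fmax η ε f Q : ℝ) :
    energyPC ψ D Pmax fmax η ε f Q
      = Pmax * (Real.exp (ψ * Q) - Real.exp ψ) * D / fmax ^ 3 * f ^ 2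
        + D / ((1 - ε) * Q * η) := by
  rw [energyPC]
  ring

lemma continuous_energyPC : Continuous fun f => energyPC ψ D Pmax fmax η ε f Q := by
  simp only [energyPC_eq]
  fun_prop

lemma eq_sqrt_of_energyPC_eq {f f' E : ℝ} (hf : 0 ≤ f)
    (hE : energyPC ψ D Pmax fmax η ε f Q = E) (hE' : energyPC ψ D Pmax fmax η ε f' Q ≠ E) :
    f = Real.sqrt ((E - D / ((1 - ε) * Q * η)) * fmax ^ 3 /
      ((Real.exp (ψ * Q) - Real.exp ψ) * D * Pmax)) := by
  rw [energyPC_eq] at hE hE'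
  set A := Pmax * (Real.exp (ψ * Q) - Real.exp ψ) * D / fmax ^ 3
  have hA : A ≠ 0 := fun hA => hE' (by rw [← hE, hA, zero_mul, zero_mul])
  have hsq : f ^ 2 = (E - D / ((1 - ε) * Q * η)) / A := by
    rw [eq_div_iff hA, ← hE]
    ring
  rw [← Real.sqrt_sq hf, hsq, div_div_eq_mul_div]
  ring_nf

end PowerConstrained

theorem energy_constraint_tight_at_optimum_general
    (ψ D Pmax fmax κ ζ fb tp np η ε ϱ Qmax Emax : ℝ)
    (hψ : 0 < ψ) (hD : 0 < D)
    (hκ : 0 < κ) (htp : 0 < tp) (hnp : 0 < np)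
    (hε : ε ∈ Ioo (0 : ℝ) 1) (hϱ : ϱ ∈ Ioo (0 : ℝ) 1)
    (fstar Qstar : ℝ)
    (hfeas : 0 < fstar ∧ fstar ≤ fmax ∧ 1 ≤ Qstar ∧ Qstar ≤ Qmax ∧
      energyPC ψ D Pmax fmax η ε fstar Qstar ≤ Emax)
    (hopt : ∀ f Q : ℝ, 0 < f → f ≤ fmax → 1 ≤ Q → Q ≤ Qmax →
      energyPC ψ D Pmax fmax η ε f Q ≤ Emax →
      latencyQuantilePC ψ D κ ζ fb tp np ε ϱ fstar Qstar ≤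
        latencyQuantilePC ψ D κ ζ fb tp np ε ϱ f Q)
    (hQstar : 1 < Qstar) :
    fstar = fmax ∨
      (energyPC ψ D Pmax fmax η ε fstar Qstar = Emax ∧
        fstar = Real.sqrt ((Emax - D / ((1 - ε) * Qstar * η)) * fmax ^ 3 /
          ((Real.exp (ψ * Qstar) - Real.exp ψ) * D * Pmax))) := by
  obtain ⟨hf₀, hf_le, hQ₁, hQ_le, hE_le⟩ := hfeas
  rcases hf_le.eq_or_lt with hf_eq | hf_lt
  · exact .inl hf_eq
  have hL := latencyQuantilePC_strictAntiOn (ζ := ζ) (fb := fb) hψ hD hκ htp hnp hε hϱ hQstar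
  have hexceeds : ∀ f ∈ Ioc fstar fmax, Emax < energyPC ψ D Pmax fmax η ε f Qstar :=
    fun f hf => lt_of_not_ge fun hE =>
      (hopt f Qstar (hf₀.trans hf.1) hf.2 hQ₁ hQ_le hE).not_gt (hL hf₀ (hf₀.trans hf.1) hf.1)
  have htight : energyPC ψ D Pmax fmax η ε fstar Qstar = Emax :=
    hE_le.antisymm <| ge_of_tendsto continuous_energyPC.continuousWithinAt
      (eventually_of_mem (Ioc_mem_nhdsGT hf_lt) fun f hf => (hexceeds f hf).le)
  exact .inr ⟨htight, eq_sqrt_of_energyPC_eq hf₀.le htight (hexceeds fmax ⟨hf_lt, le_rfl⟩).ne'⟩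

/-- **Lemma 1 (paper):** at any optimal pair `(f*, Q*)` of the power-constrained
latency-minimization problem with `Q* > 1`, either `f* = f_max` or the energy
constraint is met with equality, in which case
`f* = √((E_max − D/((1−ε) Q* η)) f_max³ / ((e^{ψQ*} − e^{ψ}) D P_max))`. -/
theorem energy_constraint_tight_at_optimum
    (ψ D Pmax fmax κ ζ fb tp np η ε ϱ Qmax Emax : ℝ)
    (hψ : 0 < ψ) (hD : 0 < D) (hPmax : 0 < Pmax) (hfmax : 0 < fmax)
    (hκ : 0 < κ) (hζ : 0 < ζ) (hfb : 0 < fb) (htp : 0 < tp) (hnp : 0 < np)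
    (hη : 0 < η) (hε : ε ∈ Ioo (0 : ℝ) 1) (hϱ : ϱ ∈ Ioo (0 : ℝ) 1)
    (hQmax : 1 < Qmax) (hEmax : 0 < Emax)
    (fstar Qstar : ℝ)
    (hfeas : 0 < fstar ∧ fstar ≤ fmax ∧ 1 ≤ Qstar ∧ Qstar ≤ Qmax ∧
      energyPC ψ D Pmax fmax η ε fstar Qstar ≤ Emax)
    (hopt : ∀ f Q : ℝ, 0 < f → f ≤ fmax → 1 ≤ Q → Q ≤ Qmax →
      energyPC ψ D Pmax fmax η ε f Q ≤ Emax →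
      latencyQuantilePC ψ D κ ζ fb tp np ε ϱ fstar Qstar ≤
        latencyQuantilePC ψ D κ ζ fb tp np ε ϱ f Q)
    (hQstar : 1 < Qstar) :
    fstar = fmax ∨
      (energyPC ψ D Pmax fmax η ε fstar Qstar = Emax ∧
        fstar = Real.sqrt ((Emax - D / ((1 - ε) * Qstar * η)) * fmax ^ 3 /
          ((Real.exp (ψ * Qstar) - Real.exp ψ) * D * Pmax))) :=
  energy_constraint_tight_at_optimum_general ψ D Pmax fmax κ ζ fb tp np η ε ϱ Qmax Emax hψ hD hκ htp
    hnp hε hϱ fstar Qstar hfeas hopt hQstar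
end

section
/- Let ψ > 0, E_max > 0, C > 0, and K > 0, and define β(Q) = K · √( (e^{ψQ} − e^{ψ})³ / (E_max − C/Q) ) for Q in an interval I ⊆ (1, ∞) on which E_max − C/Q > 0. If 3ψ²e^{ψ}·Q² − 2·E_max·Q + C ≥ 0 for all Q ∈ I, then for all nonnegative constants c₀, A, B, the function Q ↦ c₀·β(Q) + A/Q + B/√Q is convex on I. -/
/-!
Since `√(a³ / b) = b · (a / b)^{3/2}` is the perspective of the convex function `t ↦ t^{3/2}`, it is
jointly convex on `a ≥ 0, b > 0`, nondecreasing in `a` and nonincreasing in `b`. Composed with the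
convex `a(Q) = e^{ψQ} − e^{ψ} ≥ 0` and the concave `b(Q) = E_max − C/Q > 0` it yields a convex
`β`; `A/Q` and `B/√Q` are convex on `(0, ∞)`.
-/

open Real Set

theorem ConvexOn.perspective {s : Set ℝ} {φ : ℝ → ℝ} (hφ : ConvexOn ℝ s φ) :
    ConvexOn ℝ {p : ℝ × ℝ | 0 < p.2 ∧ p.1 / p.2 ∈ s} fun p => p.2 * φ (p.1 / p.2) := by
  have key : ∀ ⦃x y : ℝ × ℝ⦄, 0 < x.2 → x.1 / x.2 ∈ s → 0 < y.2 → y.1 / y.2 ∈ s →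
      ∀ ⦃α β : ℝ⦄, 0 ≤ α → 0 ≤ β → α + β = 1 →
      0 < α * x.2 + β * y.2 ∧
      (α * x.1 + β * y.1) / (α * x.2 + β * y.2) ∈ s ∧
      (α * x.2 + β * y.2) * φ ((α * x.1 + β * y.1) / (α * x.2 + β * y.2)) ≤
        α * (x.2 * φ (x.1 / x.2)) + β * (y.2 * φ (y.1 / y.2)) := by
    intro x y hx hxs hy hys α β hα hβ hαβ
    have hb : 0 < α * x.2 + β * y.2 := by
      rcases hα.eq_or_lt with rfl | hα'
      · simp only [zero_add] at hαβ; subst hαβ; simpa using hy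
      · exact add_pos_of_pos_of_nonneg (mul_pos hα' hx) (mul_nonneg hβ hy.le)
    set b := α * x.2 + β * y.2
    -- the new ratio mixes `x.1 / x.2` and `y.1 / y.2` with weights `α x.2 / b` and `β y.2 / b`
    have hw : α * x.2 / b + β * y.2 / b = 1 := by rw [← add_div, div_self hb.ne']
    have hcomb :
        (α * x.1 + β * y.1) / b = α * x.2 / b * (x.1 / x.2) + β * y.2 / b * (y.1 / y.2) := by
      field_simp
    have hw₁ : 0 ≤ α * x.2 / b := by positivity
    have hw₂ : 0 ≤ β * y.2 / b := by positivity
    refine ⟨hb, hcomb ▸ hφ.1 hxs hys hw₁ hw₂ hw, ?_⟩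
    calc b * φ ((α * x.1 + β * y.1) / b)
        ≤ b * (α * x.2 / b * φ (x.1 / x.2) + β * y.2 / b * φ (y.1 / y.2)) := by
          rw [hcomb]
          exact mul_le_mul_of_nonneg_left (hφ.2 hxs hys hw₁ hw₂ hw) hb.le
      _ = α * (x.2 * φ (x.1 / x.2)) + β * (y.2 * φ (y.1 / y.2)) := by
          field_simp
  constructor
  · rintro x ⟨hx, hxs⟩ y ⟨hy, hys⟩ α β hα hβ hαβ
    obtain ⟨hb, hmem, -⟩ := key hx hxs hy hys hα hβ hαβ
    exact ⟨by simpa using hb, by simpa using hmem⟩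
  · rintro x ⟨hx, hxs⟩ y ⟨hy, hys⟩ α β hα hβ hαβ
    simpa using (key hx hxs hy hys hα hβ hαβ).2.2

theorem convexOn_sqrt_pow_three : ConvexOn ℝ (Ici 0) fun t : ℝ => √(t ^ 3) := by
  refine (convexOn_rpow (p := 3 / 2) (by norm_num)).congr fun t ht => ?_
  rw [sqrt_eq_rpow, ← rpow_natCast, ← rpow_mul ht]
  norm_num

theorem convexOn_sqrt_pow_three_div :
    ConvexOn ℝ (Ici 0 ×ˢ Ioi 0) fun p : ℝ × ℝ => √(p.1 ^ 3 / p.2) := by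
  refine (convexOn_sqrt_pow_three.perspective.subset ?_
    ((convex_Ici 0).prod (convex_Ioi 0))).congr ?_
  · rintro ⟨a, b⟩ ⟨ha, hb⟩
    exact ⟨hb, mem_Ici.2 (div_nonneg ha hb.le)⟩
  · rintro ⟨a, b⟩ ⟨-, hb : 0 < b⟩
    have h : b ^ 2 * (a / b) ^ 3 = a ^ 3 / b := by field_simp
    dsimp only
    rw [← h, sqrt_mul (sq_nonneg b), sqrt_sq hb.le]

theorem ConvexOn.comp_convexOn_concaveOn {E : Type*} [AddCommGroup E] [Module ℝ E] {D : Set E}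
    {s t : Set ℝ} {F : ℝ × ℝ → ℝ} {f g : E → ℝ} (hF : ConvexOn ℝ (s ×ˢ t) F)
    (hF₁ : ∀ b ∈ t, MonotoneOn (fun a => F (a, b)) s)
    (hF₂ : ∀ a ∈ s, AntitoneOn (fun b => F (a, b)) t)
    (hf : ConvexOn ℝ D f) (hg : ConcaveOn ℝ D g) (hfs : MapsTo f D s) (hgt : MapsTo g D t) :
    ConvexOn ℝ D fun x => F (f x, g x) := by
  refine ⟨hf.1, fun x hx y hy α β hα hβ hαβ => ?_⟩
  have hz := hf.1 hx hy hα hβ hαβ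
  obtain ⟨hfxy, hgxy⟩ := hF.1 (mk_mem_prod (hfs hx) (hgt hx)) (mk_mem_prod (hfs hy) (hgt hy))
    hα hβ hαβ
  calc F (f (α • x + β • y), g (α • x + β • y))
      ≤ F (α * f x + β * f y, g (α • x + β • y)) :=
        hF₁ _ (hgt hz) (hfs hz) (by simpa using hfxy) (hf.2 hx hy hα hβ hαβ)
    _ ≤ F (α * f x + β * f y, α * g x + β * g y) :=
        hF₂ _ (by simpa using hfxy) (by simpa using hgxy) (hgt hz) (hg.2 hx hy hα hβ hαβ)
    _ ≤ α * F (f x, g x) + β * F (f y, g y) := by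
        simpa using hF.2 (mk_mem_prod (hfs hx) (hgt hx)) (mk_mem_prod (hfs hy) (hgt hy)) hα hβ hαβ

theorem ConvexOn.sqrt_pow_three_div {E : Type*} [AddCommGroup E] [Module ℝ E] {D : Set E}
    {f g : E → ℝ} (hf : ConvexOn ℝ D f) (hg : ConcaveOn ℝ D g) (hf₀ : ∀ x ∈ D, 0 ≤ f x)
    (hg₀ : ∀ x ∈ D, 0 < g x) : ConvexOn ℝ D fun x => √(f x ^ 3 / g x) := by
  refine convexOn_sqrt_pow_three_div.comp_convexOn_concaveOn ?_ ?_ hf hg hf₀ hg₀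
  · intro b hb a₁ ha₁ a₂ _ ha
    dsimp only
    gcongr
    exact hb.le
  · intro a ha b₁ hb₁ b₂ _ hb
    dsimp only
    gcongr
    exact pow_nonneg ha 3

theorem convexOn_inv_sqrt : ConvexOn ℝ (Ioi 0) fun x : ℝ => (√x)⁻¹ := by
  have himage : sqrt '' Ioi 0 = Ioi 0 := by
    ext y
    refine ⟨?_, fun hy => ⟨y ^ 2, mem_Ioi.2 (pow_pos hy 2), sqrt_sq hy.le⟩⟩
    rintro ⟨x, hx, rfl⟩
    exact sqrt_pos.2 hx
  have hinv : ConvexOn ℝ (Ioi 0) fun y : ℝ => y⁻¹ := by simpa using convexOn_zpow (𝕜 := ℝ) (-1)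
  refine ConvexOn.comp_concaveOn (g := fun y : ℝ => y⁻¹) ?_
    (strictConcaveOn_sqrt.concaveOn.subset Ioi_subset_Ici_self (convex_Ioi 0)) ?_
  · rwa [himage]
  · rw [himage]
    exact fun a ha b _ hab => inv_anti₀ ha hab

theorem concaveOn_sub_div {C : ℝ} (hC : 0 ≤ C) (E : ℝ) :
    ConcaveOn ℝ (Ioi 0) fun x : ℝ => E - C / x := by
  have h := ((convexOn_zpow (𝕜 := ℝ) (-1)).smul hC).neg.add_const E
  refine h.congr fun x _ => ?_
  simp only [Pi.add_apply, Pi.neg_apply, smul_eq_mul, zpow_neg_one, div_eq_mul_inv]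
  ring

theorem objective_convex_general
    (ψ Emax C K : ℝ) (hψ : 0 < ψ) (hC : 0 < C) (hK : 0 < K)
    (I : Set ℝ) (hIconv : Convex ℝ I) (hI : I ⊆ Ioi 1)
    (hpos : ∀ Q ∈ I, 0 < Emax - C / Q)
    (c₀ A B : ℝ) (hc₀ : 0 ≤ c₀) (hA : 0 ≤ A) (hB : 0 ≤ B) :
    ConvexOn ℝ I (fun Q =>
      c₀ * (K * Real.sqrt ((Real.exp (ψ * Q) - Real.exp ψ) ^ 3 / (Emax - C / Q))) +
        A / Q + B / Real.sqrt Q) := by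
  have hI₀ : I ⊆ Ioi 0 := hI.trans (Ioi_subset_Ioi zero_le_one)
  have hexp : ConvexOn ℝ I fun Q => exp (ψ * Q) - exp ψ :=
    ((convexOn_exp.comp_linearMap (LinearMap.mulLeft ℝ ψ)).add_const (-exp ψ)).subset
      (subset_univ I) hIconv
  have hexp₀ : ∀ Q ∈ I, 0 ≤ exp (ψ * Q) - exp ψ := fun Q hQ =>
    sub_nonneg.2 (exp_le_exp.2 (le_mul_of_one_le_right hψ.le (le_of_lt (hI hQ))))
  have hβ := (hexp.sqrt_pow_three_div ((concaveOn_sub_div hC.le Emax).subset hI₀ hIconv) hexp₀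
    hpos).smul (mul_nonneg hc₀ hK.le)
  have hA' := ((convexOn_zpow (𝕜 := ℝ) (-1)).subset hI₀ hIconv).smul hA
  have hB' := (convexOn_inv_sqrt.subset hI₀ hIconv).smul hB
  refine ((hβ.add hA').add hB').congr fun Q _ => ?_
  simp [div_eq_mul_inv, mul_assoc]

/-- **Theorem 1 (paper):** convexity of the relaxed single-variable objective.
With `β(Q) = K √((e^{ψQ} − e^{ψ})³ / (E_max − C/Q))`, if
`3ψ²e^{ψ} Q² − 2 E_max Q + C ≥ 0` on an interval `I ⊆ (1, ∞)` where
`E_max − C/Q > 0`, then `Q ↦ c₀ β(Q) + A/Q + B/√Q` is convex on `I`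
for all nonnegative constants `c₀, A, B`. -/
theorem objective_convex
    (ψ Emax C K : ℝ) (hψ : 0 < ψ) (hEmax : 0 < Emax) (hC : 0 < C) (hK : 0 < K)
    (I : Set ℝ) (hIconv : Convex ℝ I) (hI : I ⊆ Ioi 1)
    (hpos : ∀ Q ∈ I, 0 < Emax - C / Q)
    (hcond : ∀ Q ∈ I, 0 ≤ 3 * ψ ^ 2 * Real.exp ψ * Q ^ 2 - 2 * Emax * Q + C)
    (c₀ A B : ℝ) (hc₀ : 0 ≤ c₀) (hA : 0 ≤ A) (hB : 0 ≤ B) :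
    ConvexOn ℝ I (fun Q =>
      c₀ * (K * Real.sqrt ((Real.exp (ψ * Q) - Real.exp ψ) ^ 3 / (Emax - C / Q))) +
        A / Q + B / Real.sqrt Q) :=
  objective_convex_general ψ Emax C K hψ hC hK I hIconv hI hpos c₀ A B hc₀ hA hB
end

section
/- Let ψ > 0, E_max > 0, C > 0, and K > 0, and define β(Q) = K · √( (e^{ψQ} − e^{ψ})³ / (E_max − C/Q) ) for Q in an interval I ⊆ (1, ∞) on which E_max − C/Q > 0. If 3ψ²e^{ψ}·Q² − 2·E_max·Q + C ≥ 0 for all Q ∈ I, then β is convex on I. -/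
open Real Set

private lemma sqrt_cube_div {u v : ℝ} (hu : 0 ≤ u) :
    Real.sqrt (u ^ 3 / v) = u * Real.sqrt (u / v) := by
  rw [show u ^ 3 / v = u ^ 2 * (u / v) by ring, Real.sqrt_mul (by positivity),
    Real.sqrt_sq hu]

private lemma rpow_three_halves {t : ℝ} (ht : 0 ≤ t) :
    t ^ ((3 : ℝ) / 2) = t * Real.sqrt t := by
  rcases eq_or_lt_of_le ht with h | h
  · rw [← h, Real.zero_rpow (by norm_num)]
    simp
  · rw [show (3 : ℝ) / 2 = 1 + 1 / 2 by norm_num, Real.rpow_add h, Real.rpow_one,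
      Real.sqrt_eq_rpow]

private lemma f_ineq {t₁ t₂ a b : ℝ} (h₁ : 0 ≤ t₁) (h₂ : 0 ≤ t₂)
    (ha : 0 ≤ a) (hb : 0 ≤ b) (hab : a + b = 1) :
    (a * t₁ + b * t₂) * Real.sqrt (a * t₁ + b * t₂) ≤
      a * (t₁ * Real.sqrt t₁) + b * (t₂ * Real.sqrt t₂) := by
  have hc := (convexOn_rpow (p := 3 / 2) (by norm_num)).2
    (mem_Ici.2 h₁) (mem_Ici.2 h₂) ha hb hab
  simp only [smul_eq_mul] at hc
  rwa [rpow_three_halves (by positivity), rpow_three_halves h₁,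
    rpow_three_halves h₂] at hc

/-- Perspective inequality for `g x y = x * √(x / y)` (the perspective of `t ↦ t^{3/2}`). -/
private lemma g_perspective {x₁ x₂ y₁ y₂ a b : ℝ}
    (hx₁ : 0 ≤ x₁) (hx₂ : 0 ≤ x₂) (hy₁ : 0 < y₁) (hy₂ : 0 < y₂)
    (ha : 0 ≤ a) (hb : 0 ≤ b) (hab : a + b = 1) :
    (a * x₁ + b * x₂) * Real.sqrt ((a * x₁ + b * x₂) / (a * y₁ + b * y₂)) ≤
      a * (x₁ * Real.sqrt (x₁ / y₁)) + b * (x₂ * Real.sqrt (x₂ / y₂)) := by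
  have hY : 0 < a * y₁ + b * y₂ := by
    rcases ha.lt_or_eq with h | h
    · nlinarith [mul_nonneg hb hy₂.le]
    · have hb1 : b = 1 := by linarith
      rw [← h, hb1]; simpa using hy₂
  have key := f_ineq (t₁ := x₁ / y₁) (t₂ := x₂ / y₂)
    (a := a * y₁ / (a * y₁ + b * y₂)) (b := b * y₂ / (a * y₁ + b * y₂))
    (by positivity) (by positivity) (by positivity) (by positivity)
    (by field_simp)
  have hxy : a * y₁ / (a * y₁ + b * y₂) * (x₁ / y₁) +
      b * y₂ / (a * y₁ + b * y₂) * (x₂ / y₂) =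
      (a * x₁ + b * x₂) / (a * y₁ + b * y₂) := by
    field_simp
  rw [hxy] at key
  have h2 := mul_le_mul_of_nonneg_left key hY.le
  set s := Real.sqrt ((a * x₁ + b * x₂) / (a * y₁ + b * y₂)) with hs
  set s₁ := Real.sqrt (x₁ / y₁) with hs₁
  set s₂ := Real.sqrt (x₂ / y₂) with hs₂
  have e1 : (a * y₁ + b * y₂) * ((a * x₁ + b * x₂) / (a * y₁ + b * y₂) * s) =
      (a * x₁ + b * x₂) * s := by
    field_simp
  have e2 : (a * y₁ + b * y₂) *
      (a * y₁ / (a * y₁ + b * y₂) * (x₁ / y₁ * s₁) +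
        b * y₂ / (a * y₁ + b * y₂) * (x₂ / y₂ * s₂)) =
      a * (x₁ * s₁) + b * (x₂ * s₂) := by
    field_simp
  rw [e1, e2] at h2
  exact h2

private lemma g_mono {x x' y y' : ℝ} (hx : 0 ≤ x) (hxx : x ≤ x') (hy' : 0 < y')
    (hyy : y' ≤ y) : x * Real.sqrt (x / y) ≤ x' * Real.sqrt (x' / y') := by
  have hx' : 0 ≤ x' := hx.trans hxx
  have h : x / y ≤ x' / y' := div_le_div₀ hx' hxx hy' hyy
  exact mul_le_mul hxx (Real.sqrt_le_sqrt h) (Real.sqrt_nonneg _) hx'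

set_option maxHeartbeats 800000 in
/-- **Appendix (paper):** convexity of the Gamma scale parameter
`β(Q) = K √((e^{ψQ} − e^{ψ})³ / (E_max − C/Q))` as a function of the
compression ratio `Q`, on an interval `I ⊆ (1, ∞)` with `E_max − C/Q > 0`,
under the condition `3ψ²e^{ψ} Q² − 2 E_max Q + C ≥ 0`. -/
theorem beta_convex
    (ψ Emax C K : ℝ) (hψ : 0 < ψ) (hEmax : 0 < Emax) (hC : 0 < C) (hK : 0 < K)
    (I : Set ℝ) (hIconv : Convex ℝ I) (hI : I ⊆ Ioi 1)
    (hpos : ∀ Q ∈ I, 0 < Emax - C / Q)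
    (hcond : ∀ Q ∈ I, 0 ≤ 3 * ψ ^ 2 * Real.exp ψ * Q ^ 2 - 2 * Emax * Q + C) :
    ConvexOn ℝ I (fun Q =>
      K * Real.sqrt ((Real.exp (ψ * Q) - Real.exp ψ) ^ 3 / (Emax - C / Q))) := by
  refine ⟨hIconv, fun x hx y hy a b ha hb hab => ?_⟩
  simp only [smul_eq_mul]
  set z := a * x + b * y with hz
  have hzmem : z ∈ I := hIconv hx hy ha hb hab
  have hx1 : (1 : ℝ) < x := hI hx
  have hy1 : (1 : ℝ) < y := hI hy
  have hz1 : (1 : ℝ) < z := hI hzmem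
  have hx0 : (0 : ℝ) < x := one_pos.trans hx1
  have hy0 : (0 : ℝ) < y := one_pos.trans hy1
  have hz0 : (0 : ℝ) < z := one_pos.trans hz1
  set ux := Real.exp (ψ * x) - Real.exp ψ with hux_def
  set uy := Real.exp (ψ * y) - Real.exp ψ with huy_def
  set uz := Real.exp (ψ * z) - Real.exp ψ with huz_def
  set vx := Emax - C / x with hvx_def
  set vy := Emax - C / y with hvy_def
  set vz := Emax - C / z with hvz_def
  have hux0 : 0 ≤ ux := by
    have : Real.exp ψ ≤ Real.exp (ψ * x) :=
      Real.exp_le_exp.2 (by nlinarith)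
    linarith
  have huy0 : 0 ≤ uy := by
    have : Real.exp ψ ≤ Real.exp (ψ * y) :=
      Real.exp_le_exp.2 (by nlinarith)
    linarith
  have huz0 : 0 ≤ uz := by
    have : Real.exp ψ ≤ Real.exp (ψ * z) :=
      Real.exp_le_exp.2 (by nlinarith)
    linarith
  have hvx0 : 0 < vx := hpos x hx
  have hvy0 : 0 < vy := hpos y hy
  have hvz0 : 0 < vz := hpos z hzmem
  -- convexity of u
  have hu : uz ≤ a * ux + b * uy := by
    have h := convexOn_exp.2 (mem_univ (ψ * x)) (mem_univ (ψ * y)) ha hb hab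
    simp only [smul_eq_mul] at h
    have harg : a * (ψ * x) + b * (ψ * y) = ψ * z := by rw [hz]; ring
    rw [harg] at h
    have hsum : a * Real.exp ψ + b * Real.exp ψ = Real.exp ψ := by
      rw [← add_mul, hab, one_mul]
    simp only [huz_def, hux_def, huy_def]
    nlinarith [h]
  -- concavity of v
  have hv : a * vx + b * vy ≤ vz := by
    have key : C / z ≤ a * (C / x) + b * (C / y) := by
      have hsum : a * (C / x) + b * (C / y) = (a * C * y + b * C * x) / (x * y) := by
        field_simp
      rw [hsum, div_le_div_iff₀ hz0 (mul_pos hx0 hy0), hz]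
      have expand : (a * C * y + b * C * x) * (a * x + b * y) - C * (x * y) =
          C * (a * b) * (x - y) ^ 2 := by
        linear_combination C * x * y * (a + b + 1) * hab
      nlinarith [mul_nonneg (mul_nonneg hC.le (mul_nonneg ha hb)) (sq_nonneg (x - y))]
    simp only [hvx_def, hvy_def, hvz_def]
    have hsum : a * Emax + b * Emax = Emax := by rw [← add_mul, hab, one_mul]
    nlinarith [key]
  have hY : 0 < a * vx + b * vy := by
    rcases ha.lt_or_eq with h | h
    · nlinarith [mul_nonneg hb hvy0.le]
    · have hb1 : b = 1 := by linarith
      rw [← h, hb1]; simpa using hvy0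
  calc K * Real.sqrt (uz ^ 3 / vz)
      = K * (uz * Real.sqrt (uz / vz)) := by rw [sqrt_cube_div huz0]
    _ ≤ K * ((a * ux + b * uy) * Real.sqrt ((a * ux + b * uy) / (a * vx + b * vy))) := by
        exact mul_le_mul_of_nonneg_left (g_mono huz0 hu hY hv) hK.le
    _ ≤ K * (a * (ux * Real.sqrt (ux / vx)) + b * (uy * Real.sqrt (uy / vy))) := by
        exact mul_le_mul_of_nonneg_left
          (g_perspective hux0 huy0 hvx0 hvy0 ha hb hab) hK.le
    _ = a * (K * Real.sqrt (ux ^ 3 / vx)) + b * (K * Real.sqrt (uy ^ 3 / vy)) := by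
        rw [sqrt_cube_div hux0, sqrt_cube_div huy0]; ring
end
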